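/- arXiv:2110.07695 — 5 statements merged into one kernel-verified Lean document; each statement's English description precedes it below -/
import Mathlib

section
/- Let $G$ be a group with an internal semidirect product decomposition $G = G_2 \ltimes G_1$ (i.e., $G_1 \trianglelefteq G$, $G_2 \leq G$, $G_1 \cap G_2 = \{1\}$, and $G_1 G_2 = G$). If $H_1, H_2 \leq G_2$ are conjugate as subgroups of $G$, then they are conjugate as subgroups of $G_2$. -/
theorem stmt_1 {G : Type*} [Group G] (G1 G2 : Subgroup G) [G1.Normal]
    (hdisj : G1 ⊓ G2 = ⊥) (hprod : ∀ x : G, ∃ a ∈ G1, ∃ b ∈ G2, x = a * b)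
    (H1 H2 : Subgroup G) (h1 : H1 ≤ G2) (h2 : H2 ≤ G2)
    (hconj : ∃ a : G, Subgroup.map (MulAut.conj a).toMonoidHom H1 = H2) :
    ∃ b ∈ G2, Subgroup.map (MulAut.conj b).toMonoidHom H1 = H2 := by
  obtain ⟨a, ha⟩ := hconj
  obtain ⟨a1, ha1, a2, ha2, rfl⟩ := hprod a
  refine ⟨a2, ha2, ?_⟩
  -- key: for k in a2 H1 a2⁻¹, a1 commutes with k
  have key : ∀ k, k ∈ Subgroup.map (MulAut.conj a2).toMonoidHom H1 → a1 * k * a1⁻¹ = k := by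
    intro k hk
    obtain ⟨h, hh, rfl⟩ := hk
    simp only [MulEquiv.coe_toMonoidHom, MulAut.conj_apply] at *
    have hkG2 : a2 * h * a2⁻¹ ∈ G2 := G2.mul_mem (G2.mul_mem ha2 (h1 hh)) (G2.inv_mem ha2)
    have hconjH2 : a1 * (a2 * h * a2⁻¹) * a1⁻¹ ∈ H2 := by
      rw [← ha]
      refine ⟨h, hh, ?_⟩
      simp only [MulEquiv.coe_toMonoidHom, MulAut.conj_apply, mul_inv_rev]
      group
    have hc1 : a1 * (a2 * h * a2⁻¹) * a1⁻¹ * (a2 * h * a2⁻¹)⁻¹ ∈ G1 := by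
      have : (a2 * h * a2⁻¹) * a1⁻¹ * (a2 * h * a2⁻¹)⁻¹ ∈ G1 :=
        Subgroup.Normal.conj_mem ‹G1.Normal› _ (G1.inv_mem ha1) _
      have := G1.mul_mem ha1 this
      convert this using 1; group
    have hc2 : a1 * (a2 * h * a2⁻¹) * a1⁻¹ * (a2 * h * a2⁻¹)⁻¹ ∈ G2 :=
      G2.mul_mem (h2 hconjH2) (G2.inv_mem hkG2)
    have : a1 * (a2 * h * a2⁻¹) * a1⁻¹ * (a2 * h * a2⁻¹)⁻¹ = 1 := by
      have := hdisj ▸ (Subgroup.mem_inf.mpr ⟨hc1, hc2⟩)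
      simpa using this
    have h2eq : a1 * (a2 * h * a2⁻¹) * a1⁻¹ = a2 * h * a2⁻¹ := by
      have := mul_eq_one_iff_eq_inv.mp this
      simpa using this
    exact h2eq
  ext x
  constructor
  · intro hx
    have hfix := key x hx
    rw [← ha]
    obtain ⟨h, hh, rfl⟩ := hx
    refine ⟨h, hh, ?_⟩
    simp only [MulEquiv.coe_toMonoidHom, MulAut.conj_apply] at *
    calc (a1 * a2) * h * (a1 * a2)⁻¹ = a1 * (a2 * h * a2⁻¹) * a1⁻¹ := by group
    _ = a2 * h * a2⁻¹ := hfix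
  · intro hx
    rw [← ha] at hx
    obtain ⟨h, hh, rfl⟩ := hx
    have hk : a2 * h * a2⁻¹ ∈ Subgroup.map (MulAut.conj a2).toMonoidHom H1 :=
      ⟨h, hh, by simp [MulAut.conj_apply]⟩
    have hfix := key _ hk
    have : (MulAut.conj (a1 * a2)).toMonoidHom h = a2 * h * a2⁻¹ := by
      simp only [MulEquiv.coe_toMonoidHom, MulAut.conj_apply]
      calc (a1 * a2) * h * (a1 * a2)⁻¹ = a1 * (a2 * h * a2⁻¹) * a1⁻¹ := by group
      _ = a2 * h * a2⁻¹ := hfix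
    rw [this]
    exact hk
end

section
/- Let $G$ be a finite group with an internal semidirect product decomposition $G = G_2 \ltimes G_1$ (i.e., $G_1 \trianglelefteq G$, $G_2 \leq G$, $G_1 \cap G_2 = \{1\}$, $G_1 G_2 = G$). For any subgroups $K, H \leq G_2$, the fixed-point counts satisfy $|(G/H)^K| = |C_{G_1}(K)| \cdot |(G_2/H)^K|$, where $(G/H)^K$ and $(G_2/H)^K$ denote the $K$-fixed points of the respective left coset spaces. -/
theorem stmt_8 {G : Type*} [Group G] [Finite G] (G1 G2 : Subgroup G) [G1.Normal]
    (hdisj : G1 ⊓ G2 = ⊥) (hsup : G1 ⊔ G2 = ⊤)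
    (K H : Subgroup G) (hK : K ≤ G2) (hH : H ≤ G2) :
    Nat.card {x : G ⧸ H // ∀ k ∈ K, k • x = x} =
      Nat.card (G1 ⊓ Subgroup.centralizer (K : Set G) : Subgroup G) *
        Nat.card {x : G2 ⧸ H.subgroupOf G2 //
          ∀ k : K, (⟨(k : G), hK k.2⟩ : G2) • x = x} := by
  classical
  set C := (G1 ⊓ Subgroup.centralizer (K : Set G) : Subgroup G) with hC
  set H' := H.subgroupOf G2 with hH'
  -- the natural map  G2 ⧸ H' → G ⧸ H
  let ι : G2 ⧸ H' → G ⧸ H := fun y =>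
    Quotient.liftOn' y (fun b => ((b : G) : G ⧸ H)) (fun b b' h => by
      have h1 : b⁻¹ * b' ∈ H' := QuotientGroup.leftRel_apply.mp h
      have h2 : (b : G)⁻¹ * (b' : G) ∈ H := by
        simpa using Subgroup.mem_subgroupOf.mp h1
      exact (QuotientGroup.eq).mpr h2)
  have ι_mk : ∀ b : G2, ι ((b : G2 ⧸ H')) = ((b : G) : G ⧸ H) := fun _ => rfl
  -- the bijection
  let f : C × {x : G2 ⧸ H' // ∀ k : K, (⟨(k : G), hK k.2⟩ : G2) • x = x} →
      {x : G ⧸ H // ∀ k ∈ K, k • x = x} := fun p =>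
    ⟨(p.1 : G) • ι p.2.1, by
      obtain ⟨⟨a, ha⟩, ⟨y, hy⟩⟩ := p
      induction y using QuotientGroup.induction_on with
      | H b =>
        intro k hk
        have hcomm : k * a = a * k := ha.2 k hk
        have hb : ((⟨k, hK hk⟩ : G2) * b : G2 ⧸ H') = (b : G2 ⧸ H') := hy ⟨k, hk⟩
        have hb2 : ((k * (b : G) : G) : G ⧸ H) = ((b : G) : G ⧸ H) := by
          have := congrArg ι hb
          simpa [ι_mk] using this
        show k • (a • ((b : G) : G ⧸ H)) = a • ((b : G) : G ⧸ H)
        rw [smul_smul, hcomm, ← smul_smul]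
        have h8 : (k * (b:G))⁻¹ * (b:G) ∈ H := QuotientGroup.eq.mp hb2
        apply QuotientGroup.eq.mpr
        simp only [smul_eq_mul]
        have h9 : (a * (k * (b:G)))⁻¹ * (a * (b:G)) = (k * (b:G))⁻¹ * (b:G) := by group
        rw [h9]; exact h8⟩
  have hfbij : Function.Bijective f := by
    constructor
    · rintro ⟨⟨a, ha⟩, y⟩ ⟨⟨a', ha'⟩, y'⟩ hfe
      obtain ⟨y, hy⟩ := y
      obtain ⟨y', hy'⟩ := y'
      induction y using QuotientGroup.induction_on with
      | H b =>
      induction y' using QuotientGroup.induction_on with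
      | H b' =>
        have heq : ((a * (b : G) : G) : G ⧸ H) = ((a' * (b' : G) : G) : G ⧸ H) := by
          have := congrArg Subtype.val hfe
          simpa [f, ι_mk, MulAction.Quotient.smul_coe] using this
        have hmem : (a * (b : G))⁻¹ * (a' * (b' : G)) ∈ H := QuotientGroup.eq.mp heq
        -- a⁻¹ * a' ∈ G1 ⊓ G2 = ⊥
        have h1 : a⁻¹ * a' ∈ G1 := G1.mul_mem (G1.inv_mem ha.1) ha'.1
        have hg2 : a⁻¹ * a' = (b : G) * ((a * (b : G))⁻¹ * (a' * (b' : G))) * (b' : G)⁻¹ := by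
          group
        have h2 : a⁻¹ * a' ∈ G2 := by
          rw [hg2]
          exact G2.mul_mem (G2.mul_mem b.2 (hH hmem)) (G2.inv_mem b'.2)
        have hab : a⁻¹ * a' = 1 := by
          have : a⁻¹ * a' ∈ G1 ⊓ G2 := ⟨h1, h2⟩
          rw [hdisj] at this
          exact this
        have haa : a = a' := by
          have := mul_eq_one_iff_inv_eq.mp hab
          simpa using this
        have hbH : (b : G)⁻¹ * (b' : G) ∈ H := by
          have h3 : (a * (b : G))⁻¹ * (a' * (b' : G)) = (b : G)⁻¹ * (b' : G) := by
            rw [haa]; group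
          rw [← h3]; exact hmem
        have hbb : (b : G2 ⧸ H') = ((b' : G2) : G2 ⧸ H') := by
          apply QuotientGroup.eq.mpr
          exact Subgroup.mem_subgroupOf.mpr (by simpa using hbH)
        ext : 1
        · exact Subtype.ext haa
        · exact Subtype.ext hbb
    · rintro ⟨x, hx⟩
      induction x using QuotientGroup.induction_on with
      | H g =>
        -- decompose g = a * b
        have hg : g ∈ ((G1 ⊔ G2 : Subgroup G) : Set G) := by rw [hsup]; trivial
        rw [Subgroup.normal_mul] at hg
        obtain ⟨a, ha, b, hb, rfl⟩ := hg
        -- for each k ∈ K, a commutes with k and b fixes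
        have key : ∀ k ∈ K, k * a = a * k ∧ b⁻¹ * k * b ∈ H := by
          intro k hk
          have hxk := hx k⁻¹ (K.inv_mem hk)
          have hmem : (a * b)⁻¹ * k * (a * b) ∈ H := by
            have h0 : (k⁻¹ * (a * b))⁻¹ * (a * b) ∈ H := QuotientGroup.eq.mp hxk
            have : (k⁻¹ * (a * b))⁻¹ * (a * b) = (a * b)⁻¹ * k * (a * b) := by group
            rwa [this] at h0
          -- G1-part of (ab)⁻¹k(ab) is trivial
          have hG1 : a⁻¹ * k * a * k⁻¹ ∈ G1 := by
            have : k * a⁻¹ * k⁻¹ ∈ G1 :=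
              Subgroup.Normal.conj_mem ‹G1.Normal› a⁻¹ (G1.inv_mem ha) k
            have h2 : a⁻¹ * k * a * k⁻¹ = (a⁻¹ * (k * a * k⁻¹))⁻¹⁻¹ := by group
            have h3 : a⁻¹ * k * a * k⁻¹ = a⁻¹ * (k * a * k⁻¹) := by group
            rw [h3]
            exact G1.mul_mem (G1.inv_mem ha)
              (by simpa [mul_assoc] using Subgroup.Normal.conj_mem ‹G1.Normal› a ha k)
          have hG2 : a⁻¹ * k * a * k⁻¹ ∈ G2 := by
            have hc : a⁻¹ * k * a = b * ((a * b)⁻¹ * k * (a * b)) * b⁻¹ := by group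
            have : a⁻¹ * k * a ∈ G2 := by
              rw [hc]; exact G2.mul_mem (G2.mul_mem hb (hH hmem)) (G2.inv_mem hb)
            exact G2.mul_mem this (G2.inv_mem (hK hk))
          have htriv : a⁻¹ * k * a * k⁻¹ = 1 := by
            have : a⁻¹ * k * a * k⁻¹ ∈ G1 ⊓ G2 := ⟨hG1, hG2⟩
            rw [hdisj] at this; exact this
          have hcomm : k * a = a * k := by
            have h4 : a⁻¹ * (k * a) = a⁻¹ * (a * k) → k * a = a * k := by
              intro h; exact mul_left_cancel h
            apply h4
            have : a⁻¹ * (k * a) = (a⁻¹ * k * a * k⁻¹) * k := by group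
            rw [this, htriv]; group
          refine ⟨hcomm, ?_⟩
          have : b⁻¹ * k * b = (a * b)⁻¹ * k * (a * b) := by
            have h5 : (a * b)⁻¹ * k * (a * b) = b⁻¹ * (a⁻¹ * k * a) * b := by group
            have h6 : a⁻¹ * k * a = k := by
              have : a⁻¹ * k * a = (a⁻¹ * k * a * k⁻¹) * k := by group
              rw [this, htriv]; group
            rw [h5, h6]
          rw [this]; exact hmem
        -- centralizer membership
        have haC : a ∈ C := by
          refine ⟨ha, Subgroup.mem_centralizer_iff.mpr ?_⟩
          intro m hm
          exact (key m hm).1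
        -- fixedness in G2 ⧸ H'
        have hbfix : ∀ k : K, (⟨(k : G), hK k.2⟩ : G2) • ((⟨b, hb⟩ : G2) : G2 ⧸ H')
            = ((⟨b, hb⟩ : G2) : G2 ⧸ H') := by
          intro k
          have hk := k.2
          apply QuotientGroup.eq.mpr
          apply Subgroup.mem_subgroupOf.mpr
          have h7 : b⁻¹ * (k : G)⁻¹ * b ∈ H := (key (k : G)⁻¹ (K.inv_mem hk)).2
          simpa [mul_assoc] using h7
        refine ⟨⟨⟨a, haC⟩, ⟨((⟨b, hb⟩ : G2) : G2 ⧸ H'), hbfix⟩⟩, ?_⟩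
        apply Subtype.ext
        show (a : G) • ι _ = _
        rw [ι_mk]
        simp [MulAction.Quotient.smul_coe]
  have := Nat.card_congr (Equiv.ofBijective f hfbij)
  rw [Nat.card_prod] at this
  rw [← this]
end

section
/- Let $G$ be a finite group and let $K_1, \dots, K_n$ be pairwise non-conjugate subgroups of $G$. If integers $a_1, \dots, a_n$ satisfy $\sum_{i=1}^n a_i \, |(G/K_i)^K| = 0$ for every subgroup $K \leq G$, then $a_1 = \cdots = a_n = 0$. (Equivalently, the table of marks has linearly independent rows.) -/
theorem stmt_9 {G : Type*} [Group G] [Finite G] {n : ℕ}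
    (K : Fin n → Subgroup G)
    (hnc : ∀ i j, i ≠ j → ∀ g : G,
      Subgroup.map (MulAut.conj g).toMonoidHom (K i) ≠ K j)
    (a : Fin n → ℤ)
    (hsum : ∀ L : Subgroup G,
      ∑ i, a i * (Nat.card {x : G ⧸ K i // ∀ k ∈ L, k • x = x} : ℤ) = 0) :
    ∀ i, a i = 0 := by
  by_contra h
  push_neg at h
  obtain ⟨i0, hi0⟩ := h
  have hne : (Finset.univ.filter fun i => a i ≠ 0).Nonempty :=
    ⟨i0, by simp [hi0]⟩
  obtain ⟨i, hi, hmax⟩ :=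
    (Finset.univ.filter fun i => a i ≠ 0).exists_max_image
      (fun i => Nat.card (K i)) hne
  simp only [Finset.mem_filter, Finset.mem_univ, true_and] at hi hmax
  have hs := hsum (K i)
  rw [Finset.sum_eq_single i] at hs
  · have hpos : 0 < Nat.card {x : G ⧸ K i // ∀ k ∈ K i, k • x = x} := by
      have hno : Nonempty {x : G ⧸ K i // ∀ k ∈ K i, k • x = x} := by
        refine ⟨⟨((1 : G) : G ⧸ K i), ?_⟩⟩
        intro k hk
        rw [MulAction.Quotient.smul_mk]
        refine QuotientGroup.eq.mpr ?_
        simpa using (K i).inv_mem hk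
      exact Nat.card_pos
    rcases mul_eq_zero.mp hs with h1 | h2
    · exact hi h1
    · exact absurd h2 (by positivity)
  · intro j _ hji
    by_cases haj : a j = 0
    · simp [haj]
    rcases isEmpty_or_nonempty {x : G ⧸ K j // ∀ k ∈ K i, k • x = x} with he | hne'
    · simp [Nat.card_of_isEmpty]
    exfalso
    obtain ⟨x, hx⟩ := hne'
    obtain ⟨g, rfl⟩ := QuotientGroup.mk_surjective x
    have hle : Subgroup.map (MulAut.conj g⁻¹).toMonoidHom (K i) ≤ K j := by
      rintro y ⟨k, hk, rfl⟩
      have := hx k hk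
      rw [MulAction.Quotient.smul_mk] at this
      have hmem := QuotientGroup.eq.mp this
      -- hmem : (k * g)⁻¹ * g ∈ K j
      have : g⁻¹ * k⁻¹ * g ∈ K j := by
        simpa [mul_assoc] using hmem
      have h2 := (K j).inv_mem this
      simpa [MulAut.conj_apply, mul_assoc] using h2
    have hcard : Nat.card (Subgroup.map (MulAut.conj g⁻¹).toMonoidHom (K i))
        = Nat.card (K i) :=
      (Nat.card_congr
        ((Subgroup.equivMapOfInjective (K i) (MulAut.conj g⁻¹).toMonoidHom
          (MulAut.conj g⁻¹).injective).toEquiv)).symm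
    have hge : Nat.card (K j) ≤
        Nat.card (Subgroup.map (MulAut.conj g⁻¹).toMonoidHom (K i)) := by
      rw [hcard]; exact hmax j haj
    exact hnc i j (Ne.symm hji) g⁻¹ (Subgroup.eq_of_le_of_card_ge hle hge)
  · intro hni
    exact absurd (Finset.mem_univ i) hni
end

section
/- Let $G$ be a finite group and $\mathscr{F}$ a family of subgroups of $G$ closed under conjugation and under taking subgroups. Then there exist rational numbers $c_H$ for $H \in \mathscr{F}$, constant on conjugacy classes, whose denominators divide a power of $|G|$, such that for every $K \in \mathscr{F}$: $\sum_{[H]} c_H \, |(G/H)^K| = 1$, where the sum runs over one representative $H$ from each conjugacy class contained in $\mathscr{F}$. -/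
/-!
The table of marks `m(H, K) = |(G/H)^K|` is triangular on conjugacy classes of subgroups ordered by
cardinality: `m(H, K) ≠ 0` forces `K` to be subconjugate to `H`, so for `|H| ≤ |K|` only the
diagonal survives, and the diagonal entry `m(H, H) = |N_G(H) : H|` divides `|G|`. The system
`∑_H c_H m(H, K) = 1`, restricted to the classes meeting `F`, is therefore solved by recursion
from the largest subgroups downwards, each step dividing by a divisor of `|G|`.
-/

open MulAction ConjAct Pointwise

def zAdjoinInv (n : ℕ) : Subring ℚ where
  carrier := {q | ∃ (j : ℕ) (m : ℤ), q * n ^ j = m}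
  mul_mem' := by
    rintro q r ⟨j, a, ha⟩ ⟨k, b, hb⟩
    exact ⟨j + k, a * b, by
      push_cast; rw [pow_add]; linear_combination (r * n ^ k) * ha + a * hb⟩
  one_mem' := ⟨0, 1, by simp⟩
  add_mem' := by
    rintro q r ⟨j, a, ha⟩ ⟨k, b, hb⟩
    exact ⟨j + k, a * n ^ k + b * n ^ j, by
      push_cast; rw [pow_add]; linear_combination (n : ℚ) ^ k * ha + (n : ℚ) ^ j * hb⟩
  zero_mem' := ⟨0, 0, by simp⟩
  neg_mem' := by
    rintro q ⟨j, a, ha⟩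
    exact ⟨j, -a, by push_cast; linear_combination -ha⟩

theorem mem_zAdjoinInv {n : ℕ} {q : ℚ} :
    q ∈ zAdjoinInv n ↔ ∃ (j : ℕ) (m : ℤ), q * n ^ j = m :=
  Iff.rfl

theorem inv_natCast_mem_zAdjoinInv {d n : ℕ} (h : d ∣ n) : (d : ℚ)⁻¹ ∈ zAdjoinInv n := by
  obtain ⟨k, rfl⟩ := h
  rcases eq_or_ne d 0 with rfl | hd
  · simp
  · exact ⟨1, k, by field_simp; push_cast; ring⟩

theorem exists_sum_mul_eq_one_of_triangular {ι K α : Type*} [Field K] [LinearOrder α]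
    (A : Subring K) (rank : ι → α) (m : ι → ι → K) (hm : ∀ i j, m i j ∈ A)
    (hdiag : ∀ i, m i i ≠ 0) (hdiag_inv : ∀ i, (m i i)⁻¹ ∈ A)
    (htri : ∀ i j, i ≠ j → rank i ≤ rank j → m i j = 0) (s : Finset ι) :
    ∃ c : ι → K, (∀ i ∈ s, c i ∈ A) ∧ ∀ j ∈ s, ∑ i ∈ s, c i * m i j = 1 := by
  classical
  induction s using Finset.induction_on_min_value rank with
  | empty => exact ⟨0, by simp, by simp⟩
  | insert a s ha hmin ih =>
    obtain ⟨c, hcA, hc⟩ := ih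
    set x := (1 - ∑ i ∈ s, c i * m i a) * (m a a)⁻¹
    have hupd : ∀ i ∈ s, Function.update c a x i = c i := fun i hi =>
      Function.update_of_ne (ne_of_mem_of_not_mem hi ha) _ _
    refine ⟨Function.update c a x, ?_, ?_⟩
    · intro i hi
      rcases Finset.mem_insert.mp hi with rfl | hi
      · simp only [Function.update_self, x]
        exact A.mul_mem (A.sub_mem A.one_mem (A.sum_mem fun i hi => A.mul_mem (hcA i hi) (hm i _)))
          (hdiag_inv i)
      · rw [hupd i hi]; exact hcA i hi
    · intro j hj
      rw [Finset.sum_insert ha, Function.update_self, Finset.sum_congr rfl fun i hi => by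
        rw [hupd i hi]]
      rcases Finset.mem_insert.mp hj with rfl | hj
      · rw [inv_mul_cancel_right₀ (hdiag j)]
        ring
      · rw [htri a j (ne_of_mem_of_not_mem hj ha).symm (hmin j hj), mul_zero, zero_add, hc j hj]

namespace Subgroup

variable {G : Type*} [Group G]

noncomputable def mark (H K : Subgroup G) : ℕ :=
  Nat.card {x : G ⧸ H // ∀ k ∈ K, k • x = x}

theorem fixes_mk_iff_le_smul {H K : Subgroup G} {a : G} :
    (∀ k ∈ K, k • (a : G ⧸ H) = a) ↔ K ≤ toConjAct a • H := by
  have hstab : stabilizer G (a : G ⧸ H) = toConjAct a • H := by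
    have ha : (a : G ⧸ H) = a • ((1 : G) : G ⧸ H) := by
      rw [MulAction.Quotient.smul_mk, smul_eq_mul, mul_one]
    rw [ha, stabilizer_smul_eq_stabilizer_map_conj, stabilizer_quotient]
    rfl
  rw [← hstab]
  rfl

theorem card_mul_mark (H K : Subgroup G) :
    Nat.card H * mark H K = Nat.card {a : G // K ≤ toConjAct a • H} :=
  (QuotientGroup.card_preimage_mk H {x | ∀ k ∈ K, k • x = x}).symm.trans
    (Nat.card_congr (Equiv.subtypeEquivRight fun _ => fixes_mk_iff_le_smul))

theorem card_smul (g : G) (H : Subgroup G) :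
    Nat.card (toConjAct g • H : Subgroup G) = Nat.card H :=
  (Nat.card_congr (equivSMul _ H).toEquiv).symm

variable [Finite G]

theorem eq_smul_of_le_smul {H K : Subgroup G} {g : G}
    (hle : K ≤ toConjAct g • H) (hcard : Nat.card H ≤ Nat.card K) : K = toConjAct g • H :=
  eq_of_le_of_card_ge hle (by rwa [card_smul])

theorem mark_smul_left (g : G) (H K : Subgroup G) : mark (toConjAct g • H) K = mark H K := by
  refine Nat.eq_of_mul_eq_mul_left (Nat.card_pos (α := H)) ?_
  conv_lhs => rw [← card_smul g H]
  rw [card_mul_mark, card_mul_mark]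
  exact Nat.card_congr <| Equiv.subtypeEquiv (Equiv.mulRight g) fun a => by
    rw [Equiv.coe_mulRight, map_mul, mul_smul]

theorem mark_smul_right (g : G) (H K : Subgroup G) : mark H (toConjAct g • K) = mark H K := by
  refine Nat.eq_of_mul_eq_mul_left (Nat.card_pos (α := H)) ?_
  rw [card_mul_mark, card_mul_mark]
  exact Nat.card_congr <| Equiv.subtypeEquiv (Equiv.mulLeft g⁻¹) fun a => by
    rw [pointwise_smul_subset_iff, Equiv.coe_mulLeft, map_mul, mul_smul, toConjAct_inv]

theorem mark_self_ne_zero (H : Subgroup G) : mark H H ≠ 0 := by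
  have hpos : 0 < Nat.card {a : G // H ≤ toConjAct a • H} :=
    Nat.card_pos_iff.mpr ⟨⟨⟨1, by simp⟩⟩, inferInstance⟩
  rw [← card_mul_mark] at hpos
  exact (Nat.pos_of_mul_pos_left hpos).ne'

theorem mark_self_dvd_card (H : Subgroup G) : mark H H ∣ Nat.card G := by
  have hnorm : Nat.card H * mark H H = Nat.card (normalizer (H : Set G)) := by
    rw [card_mul_mark]
    exact Nat.card_congr <| Equiv.subtypeEquivRight fun a => by
      rw [← conjAct_pointwise_smul_iff]
      exact ⟨fun hle => (eq_smul_of_le_smul hle le_rfl).symm, fun h => h.ge⟩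
  exact (Dvd.intro_left _ hnorm).trans (card_subgroup_dvd_card _)

theorem exists_le_smul_of_mark_ne_zero {H K : Subgroup G} (h : mark H K ≠ 0) :
    ∃ g : G, K ≤ toConjAct g • H := by
  have hpos : 0 < Nat.card {a : G // K ≤ toConjAct a • H} := by
    rw [← card_mul_mark]; exact Nat.mul_pos Nat.card_pos (Nat.pos_of_ne_zero h)
  obtain ⟨⟨g, hg⟩⟩ := (Nat.card_pos_iff.mp hpos).1
  exact ⟨g, hg⟩

end Subgroup

abbrev SubgroupConjClasses (G : Type*) [Group G] : Type _ :=
  orbitRel.Quotient (ConjAct G) (Subgroup G)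

namespace SubgroupConjClasses

variable {G : Type*} [Group G]

def mk : Subgroup G → SubgroupConjClasses G := Quotient.mk''

theorem mk_eq_mk_iff {H K : Subgroup G} : mk H = mk K ↔ ∃ g : G, toConjAct g • K = H := by
  rw [mk, Quotient.eq'', orbitRel_apply, mem_orbit_iff, toConjAct.surjective.exists]

theorem mk_smul (g : G) (H : Subgroup G) : mk (toConjAct g • H) = mk H :=
  mk_eq_mk_iff.mpr ⟨g, rfl⟩

noncomputable def card : SubgroupConjClasses G → ℕ :=
  Quotient.lift (fun H => Nat.card H) <| by
    rintro _ H ⟨c, rfl⟩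
    obtain ⟨g, rfl⟩ := toConjAct.surjective c
    exact Subgroup.card_smul g H

variable [Finite G]

noncomputable def ofSet (F : Set (Subgroup G)) : Finset (SubgroupConjClasses G) :=
  (Set.toFinite (mk '' F)).toFinset

theorem mem_ofSet {F : Set (Subgroup G)} {C : SubgroupConjClasses G} :
    C ∈ ofSet F ↔ ∃ H ∈ F, mk H = C :=
  Set.Finite.mem_toFinset _

theorem mk_mem_ofSet {F : Set (Subgroup G)} {H : Subgroup G} (hH : H ∈ F) : mk H ∈ ofSet F :=
  mem_ofSet.mpr ⟨H, hH, rfl⟩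

theorem image_mk_eq_ofSet_of_transversal [DecidableEq (SubgroupConjClasses G)]
    {F : Set (Subgroup G)} {R : Finset (Subgroup G)} (hRF : ↑R ⊆ F)
    (hR : ∀ H ∈ F, ∃! H' : Subgroup G, H' ∈ R ∧ ∃ g : G, toConjAct g • H = H') :
    Set.InjOn mk (R : Set (Subgroup G)) ∧ R.image mk = ofSet F := by
  refine ⟨fun H₁ h₁ H₂ h₂ h => ?_, ?_⟩
  · obtain ⟨g, hg⟩ := mk_eq_mk_iff.mp h
    exact (hR H₂ (hRF h₂)).unique ⟨h₁, g, hg⟩ ⟨h₂, 1, by simp⟩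
  · ext C
    rw [Finset.mem_image, mem_ofSet]
    constructor
    · rintro ⟨H, hH, rfl⟩
      exact ⟨H, hRF hH, rfl⟩
    · rintro ⟨H, hH, rfl⟩
      obtain ⟨H', ⟨hH', g, rfl⟩, -⟩ := hR H hH
      exact ⟨_, hH', mk_smul g H⟩

noncomputable def mark : SubgroupConjClasses G → SubgroupConjClasses G → ℕ :=
  Quotient.lift₂ Subgroup.mark <| by
    rintro _ _ H K ⟨c, rfl⟩ ⟨d, rfl⟩
    obtain ⟨g, rfl⟩ := toConjAct.surjective c
    obtain ⟨h, rfl⟩ := toConjAct.surjective d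
    exact (Subgroup.mark_smul_left g _ _).trans (Subgroup.mark_smul_right h H K)

theorem mark_self_ne_zero (C : SubgroupConjClasses G) : mark C C ≠ 0 :=
  Quotient.inductionOn C Subgroup.mark_self_ne_zero

theorem mark_self_dvd_card (C : SubgroupConjClasses G) : mark C C ∣ Nat.card G :=
  Quotient.inductionOn C Subgroup.mark_self_dvd_card

theorem mark_eq_zero_of_card_le {C D : SubgroupConjClasses G} (hne : C ≠ D)
    (hle : card C ≤ card D) : mark C D = 0 := by
  induction C, D using Quotient.inductionOn₂ with | h H K => ?_
  by_contra hmark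
  obtain ⟨g, hg⟩ := Subgroup.exists_le_smul_of_mark_ne_zero hmark
  exact hne (mk_eq_mk_iff.mpr ⟨g, (Subgroup.eq_smul_of_le_smul hg hle).symm⟩).symm

end SubgroupConjClasses

open SubgroupConjClasses in
theorem stmt_11_general {G : Type*} [Group G] [Finite G]
    (F : Set (Subgroup G)) :
    ∃ c : Subgroup G → ℚ,
      (∀ H ∈ F, ∀ g : G, c (Subgroup.map (MulAut.conj g).toMonoidHom H) = c H) ∧
      (∀ H ∈ F, ∃ (j : ℕ) (m : ℤ), c H * (Nat.card G : ℚ) ^ j = (m : ℚ)) ∧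
      (∀ R : Finset (Subgroup G), ↑R ⊆ F →
        (∀ H ∈ F, ∃! H' : Subgroup G, H' ∈ R ∧
          ∃ g : G, Subgroup.map (MulAut.conj g).toMonoidHom H = H') →
        ∀ K ∈ F, ∑ H ∈ R, c H *
          (Nat.card {x : G ⧸ H // ∀ k ∈ K, k • x = x} : ℚ) = 1) := by
  classical
  obtain ⟨c, hcA, hc⟩ := exists_sum_mul_eq_one_of_triangular (zAdjoinInv (Nat.card G)) card
    (fun C D => (mark C D : ℚ)) (fun _ _ => natCast_mem _ _)
    (fun C => Nat.cast_ne_zero.mpr (mark_self_ne_zero C))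
    (fun C => inv_natCast_mem_zAdjoinInv (mark_self_dvd_card C))
    (fun C D hne hle => by rw [mark_eq_zero_of_card_le hne hle, Nat.cast_zero]) (ofSet F)
  refine ⟨fun H => c (mk H), fun H _ g => congrArg c (mk_smul g H),
    fun H hH => mem_zAdjoinInv.mp (hcA _ (mk_mem_ofSet hH)), fun R hRF hR K hK => ?_⟩
  obtain ⟨hinj, himage⟩ := image_mk_eq_ofSet_of_transversal hRF hR
  rw [← hc _ (mk_mem_ofSet hK), ← himage, Finset.sum_image hinj]
  rfl

theorem stmt_11 {G : Type*} [Group G] [Finite G]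
    (F : Set (Subgroup G))
    (hconj : ∀ H ∈ F, ∀ g : G, Subgroup.map (MulAut.conj g).toMonoidHom H ∈ F)
    (hsub : ∀ H ∈ F, ∀ K : Subgroup G, K ≤ H → K ∈ F) :
    ∃ c : Subgroup G → ℚ,
      (∀ H ∈ F, ∀ g : G, c (Subgroup.map (MulAut.conj g).toMonoidHom H) = c H) ∧
      (∀ H ∈ F, ∃ (j : ℕ) (m : ℤ), c H * (Nat.card G : ℚ) ^ j = (m : ℚ)) ∧
      (∀ R : Finset (Subgroup G), ↑R ⊆ F →
        (∀ H ∈ F, ∃! H' : Subgroup G, H' ∈ R ∧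
          ∃ g : G, Subgroup.map (MulAut.conj g).toMonoidHom H = H') →
        ∀ K ∈ F, ∑ H ∈ R, c H *
          (Nat.card {x : G ⧸ H // ∀ k ∈ K, k • x = x} : ℚ) = 1) :=
  stmt_11_general F
end

section
/- Let $G$ be a group with internal semidirect decomposition $G = G_2 \ltimes G_1$ ($G_1 \trianglelefteq G$, $G_2 \leq G$, $G_1 \cap G_2 = \{1\}$, $G_1G_2 = G$). Let $H \leq G_2$ and let $L \leq G$ be a subgroup with $H \trianglelefteq L$ (i.e., $L$ normalizes $H$). Then every $x \in L$, written (uniquely) as $x = ab$ with $a \in G_1$ and $b \in G_2$, satisfies $a \in C_{G_1}(H)$ and $b \in N_{G_2}(H)$. -/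
/-!
Conjugation by `x = a * b` and by `b` move `H ≤ G₂` into `G₂`, so conjugation by `a` does too.
For `h ∈ H` the commutator `a⁻¹ h a h⁻¹` then lies in `G₂`, and it lies in `G₁` because `G₁`
is normal; as `G₁ ∩ G₂ = 1`, `a` centralizes `H`. Hence `b = a⁻¹ x` normalizes `H`.
-/

namespace Subgroup

variable {G : Type*} [Group G]

theorem commute_of_conj_mem_of_inf_eq_bot {N K : Subgroup G} [hN : N.Normal] (hNK : N ⊓ K = ⊥)
    {a h : G} (ha : a ∈ N) (hh : h ∈ K) (hconj : a⁻¹ * h * a ∈ K) : Commute a h := by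
  have hmemN : a⁻¹ * h * a * h⁻¹ ∈ N := by
    simpa only [mul_assoc] using N.mul_mem (N.inv_mem ha) (hN.conj_mem a ha h)
  have hmemK : a⁻¹ * h * a * h⁻¹ ∈ K := K.mul_mem hconj (K.inv_mem hh)
  have hcomm : a⁻¹ * h * a * h⁻¹ = 1 := by
    simpa only [hNK, mem_bot] using mem_inf.mpr ⟨hmemN, hmemK⟩
  rw [mul_inv_eq_one, mul_assoc, inv_mul_eq_iff_eq_mul] at hcomm
  exact hcomm.symm

theorem mem_centralizer_of_mul_mem_normalizer {N K H : Subgroup G} [N.Normal]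
    (hNK : N ⊓ K = ⊥) (hHK : H ≤ K) {a b : G} (ha : a ∈ N) (hb : b ∈ K)
    (hab : a * b ∈ normalizer (H : Set G)) : a ∈ centralizer (H : Set G) := by
  rw [mem_centralizer_iff]
  intro h hh
  have hconjx : (a * b)⁻¹ * h * (a * b) ∈ H := by
    simpa only [inv_inv] using (mem_normalizer_iff.mp (inv_mem hab) h).mp hh
  have hconja : a⁻¹ * h * a = b * ((a * b)⁻¹ * h * (a * b)) * b⁻¹ := by group
  have hmem : a⁻¹ * h * a ∈ K := hconja ▸ K.mul_mem (K.mul_mem hb (hHK hconjx)) (K.inv_mem hb)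
  exact (commute_of_conj_mem_of_inf_eq_bot hNK ha (hHK hh) hmem).symm

theorem mem_normalizer_of_mul_mem_normalizer {H : Subgroup G} {a b : G}
    (ha : a ∈ centralizer (H : Set G)) (hab : a * b ∈ normalizer (H : Set G)) :
    b ∈ normalizer (H : Set G) := by
  simpa only [inv_mul_cancel_left] using
    mul_mem (inv_mem (centralizer_le_normalizer _ ha)) hab

end Subgroup

theorem stmt_13_general {G : Type*} [Group G] (G1 G2 : Subgroup G) [G1.Normal]
    (hdisj : G1 ⊓ G2 = ⊥)
    (H : Subgroup G) (hH : H ≤ G2)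
    (L : Subgroup G) (hLn : L ≤ Subgroup.normalizer (H : Set G)) :
    ∀ x ∈ L, ∀ a b : G, a ∈ G1 → b ∈ G2 → x = a * b →
      (∀ h ∈ H, a * h = h * a) ∧ b ∈ Subgroup.normalizer (H : Set G) := by
  rintro x hx a b ha hb rfl
  have hcent := Subgroup.mem_centralizer_of_mul_mem_normalizer hdisj hH ha hb (hLn hx)
  exact ⟨fun h hh => (Subgroup.mem_centralizer_iff.mp hcent h hh).symm,
    Subgroup.mem_normalizer_of_mul_mem_normalizer hcent (hLn hx)⟩

theorem stmt_13 {G : Type*} [Group G] (G1 G2 : Subgroup G) [G1.Normal]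
    (hdisj : G1 ⊓ G2 = ⊥) (hprod : ∀ x : G, ∃ a ∈ G1, ∃ b ∈ G2, x = a * b)
    (H : Subgroup G) (hH : H ≤ G2)
    (L : Subgroup G) (hLn : L ≤ Subgroup.normalizer (H : Set G)) :
    ∀ x ∈ L, ∀ a b : G, a ∈ G1 → b ∈ G2 → x = a * b →
      (∀ h ∈ H, a * h = h * a) ∧ b ∈ Subgroup.normalizer (H : Set G) :=
  stmt_13_general G1 G2 hdisj H hH L hLn
end
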